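/- Let n = m + r with m ≥ 3, τ ∈ {1,−1}, κ ∈ ℝ, let A', D' be r×r real symmetric matrices, and set A = blockDiag(τE_m, A') and D = blockDiag(τE_mJ(κ,m), D'). Let b, e ∈ ℝⁿ and c ∈ ℝ, and suppose the Slater condition holds. Then problem (P) is unbounded from below. -/

import Mathlib

open Matrix

/-- The `m × m` anti-diagonal matrix `E_m`: `(E_m)_{i,j} = 1` iff `i + j = m + 1`
(with 1-based indexing). -/
noncomputable def Emat (m : ℕ) : Matrix (Fin m) (Fin m) ℝ :=
  fun i j => if (i : ℕ) + (j : ℕ) + 1 = m then 1 else 0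

/-- The `m × m` real Jordan block `J(λ, m)` with `λ` on the diagonal and `1` on the
superdiagonal. -/
noncomputable def jordanBlock (m : ℕ) (lam : ℝ) : Matrix (Fin m) (Fin m) ℝ :=
  fun i j => if i = j then lam else if (i : ℕ) + 1 = (j : ℕ) then 1 else 0

/-!
If some direction `d` makes both quadratic forms negative, `dᵀAd < 0` and `dᵀDd < 0`, then along
the ray `t ↦ t • d` both `h` and `f` are quadratics in `t` with negative leading coefficient, so
`h` eventually becomes nonpositive while `f` tends to `-∞`. For the block `(τ E_m, τ E_m J(κ, m))`
such a direction is supported on the coordinates `0`, `1` and `m - 1`: with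
`y = t e₀ + s e₁ + e_{m-1}` one has `yᵀ E_m y = 2t + [m = 3] s²` and
`yᵀ E_m J(κ, m) y = κ yᵀ E_m y + 2s`, and `s`, `t` can be chosen to make both forms have the
sign of `-τ`.
-/

open Filter

theorem tendsto_quadratic_atBot {a : ℝ} (ha : a < 0) (b c : ℝ) :
    Tendsto (fun t : ℝ => a * t ^ 2 + b * t + c) atTop atBot := by
  have h : Tendsto (fun t : ℝ => t * (a * t + b)) atTop atBot :=
    tendsto_id.atTop_mul_atBot₀
      ((tendsto_id.const_mul_atTop_of_neg ha).atBot_add tendsto_const_nhds)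
  refine (h.atBot_add (tendsto_const_nhds (x := c))).congr fun t => ?_
  ring

theorem exists_quadratic_le_zero_and_lt_of_neg_direction {ι : Type*} [Fintype ι]
    {A D : Matrix ι ι ℝ} {d : ι → ℝ} (hA : d ⬝ᵥ A *ᵥ d < 0) (hD : d ⬝ᵥ D *ᵥ d < 0)
    (b e : ι → ℝ) (c M : ℝ) :
    ∃ x : ι → ℝ, (1/2) * (x ⬝ᵥ A *ᵥ x) + b ⬝ᵥ x + c ≤ 0 ∧
      (1/2) * (x ⬝ᵥ D *ᵥ x) + e ⬝ᵥ x < M := by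
  have along_ray : ∀ (P : Matrix ι ι ℝ) (v : ι → ℝ) (t : ℝ),
      (1/2) * ((t • d) ⬝ᵥ P *ᵥ (t • d)) + v ⬝ᵥ (t • d)
        = (d ⬝ᵥ P *ᵥ d) / 2 * t ^ 2 + (v ⬝ᵥ d) * t := by
    intro P v t
    simp only [mulVec_smul, dotProduct_smul, smul_dotProduct, smul_eq_mul]
    ring
  have hh := tendsto_quadratic_atBot (div_neg_of_neg_of_pos hA two_pos) (b ⬝ᵥ d) c
  have hf := tendsto_quadratic_atBot (div_neg_of_neg_of_pos hD two_pos) (e ⬝ᵥ d) 0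
  obtain ⟨t, ht_h, ht_f⟩ :=
    ((hh.eventually (eventually_le_atBot 0)).and (hf.eventually (eventually_lt_atBot M))).exists
  refine ⟨t • d, ?_, ?_⟩
  · rwa [along_ray]
  · rw [along_ray]
    linarith

theorem dotProduct_reindex_fromBlocks_mulVec {m n ι : Type*} [Fintype m] [Fintype n]
    [Fintype ι] (e : m ⊕ n ≃ ι) (P : Matrix m m ℝ) (Q : Matrix n n ℝ) (y : m → ℝ) :
    (Sum.elim y 0 ∘ e.symm) ⬝ᵥ reindex e e (fromBlocks P 0 0 Q) *ᵥ (Sum.elim y 0 ∘ e.symm) =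
      y ⬝ᵥ P *ᵥ y := by
  rw [reindex_apply, submatrix_mulVec_equiv, dotProduct_comp_equiv_symm]
  simp [Function.comp_assoc, fromBlocks_mulVec, sumElim_dotProduct_sumElim]

theorem Emat_apply_eq_ite_rev {m : ℕ} (i j : Fin m) :
    Emat m i j = if j = i.rev then 1 else 0 := by
  simp only [Emat, Fin.ext_iff, Fin.val_rev]
  congr 1
  grind

theorem Emat_mul_apply {m : ℕ} (M : Matrix (Fin m) (Fin m) ℝ) (i j : Fin m) :
    (Emat m * M) i j = M i.rev j := by
  simp [mul_apply, Emat_apply_eq_ite_rev]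

section TestVector

variable (k : ℕ) (t s : ℝ)

noncomputable def testVec : Fin (k + 3) → ℝ :=
  Pi.single 0 t + Pi.single 1 s + Pi.single (Fin.last _) 1

theorem testVec_dotProduct_Emat_mulVec :
    testVec k t s ⬝ᵥ Emat (k + 3) *ᵥ testVec k t s = 2 * t + Emat (k + 3) 1 1 * s ^ 2 := by
  simp only [testVec, mulVec_add, mulVec_single, op_smul_eq_smul, dotProduct_add, dotProduct_smul,
    add_dotProduct, single_dotProduct, col_apply, Emat, Fin.coe_ofNat_eq_mod, Nat.zero_mod,
    Nat.right_eq_add, Nat.add_eq_zero_iff, OfNat.ofNat_ne_zero, and_false, ↓reduceIte, Nat.one_mod,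
    one_ne_zero, Fin.val_last, Nat.add_right_cancel_iff, Nat.add_eq_left, Nat.add_eq_right]
  split_ifs <;> ring

theorem testVec_dotProduct_Emat_mul_jordanBlock_mulVec (κ : ℝ) :
    testVec k t s ⬝ᵥ (Emat (k + 3) * jordanBlock (k + 3) κ) *ᵥ testVec k t s =
      κ * (testVec k t s ⬝ᵥ Emat (k + 3) *ᵥ testVec k t s) + 2 * s := by
  simp only [testVec, mulVec_add, mulVec_single, op_smul_eq_smul, one_smul, dotProduct_add,
    dotProduct_smul, add_dotProduct, single_dotProduct, col_apply, Emat_mul_apply, jordanBlock,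
    Fin.ext_iff, Fin.val_last, Fin.coe_ofNat_eq_mod, Nat.zero_mod, ↓reduceIte, Fin.val_rev,
    Nat.one_mod, Nat.reduceSubDiff, Fin.rev_last, Nat.reduceEqDiff, Nat.add_eq_right,
    Nat.add_left_cancel_iff, Emat, Nat.add_eq_left]
  split_ifs <;> ring

end TestVector

theorem exists_mul_Emat_forms_neg (k : ℕ) {τ : ℝ} (hτ : τ ≠ 0) (κ : ℝ) :
    ∃ y : Fin (k + 3) → ℝ, τ * (y ⬝ᵥ Emat (k + 3) *ᵥ y) < 0 ∧
      τ * (y ⬝ᵥ (Emat (k + 3) * jordanBlock (k + 3) κ) *ᵥ y) < 0 := by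
  set s := -τ * (|κ| + 1)
  set t := -(τ + Emat (k + 3) 1 1 * s ^ 2) / 2
  have hE := testVec_dotProduct_Emat_mulVec k t s
  have hEJ := testVec_dotProduct_Emat_mul_jordanBlock_mulVec k t s κ
  have hqE : 2 * t + Emat (k + 3) 1 1 * s ^ 2 = -τ := by ring
  have hτsq : 0 < τ ^ 2 := by positivity
  refine ⟨testVec k t s, ?_, ?_⟩
  · rw [hE, hqE]
    linarith
  · rw [hEJ, hE, hqE]
    nlinarith [le_abs_self κ, neg_abs_le κ]

theorem stmt_3 (m r : ℕ) (hm : 3 ≤ m) (τ κ : ℝ) (hτ : τ = 1 ∨ τ = -1)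
    (A' D' : Matrix (Fin r) (Fin r) ℝ)
    (A D : Matrix (Fin (m + r)) (Fin (m + r)) ℝ)
    (hA : A = Matrix.reindex finSumFinEquiv finSumFinEquiv
      (Matrix.fromBlocks (τ • Emat m) 0 0 A'))
    (hD : D = Matrix.reindex finSumFinEquiv finSumFinEquiv
      (Matrix.fromBlocks (τ • (Emat m * jordanBlock m κ)) 0 0 D'))
    (b e : Fin (m + r) → ℝ) (c : ℝ) :
    ∀ M : ℝ, ∃ x : Fin (m + r) → ℝ,
      (1/2) * (x ⬝ᵥ A.mulVec x) + b ⬝ᵥ x + c ≤ 0 ∧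
      (1/2) * (x ⬝ᵥ D.mulVec x) + e ⬝ᵥ x < M := by
  intro M
  obtain ⟨k, rfl⟩ : ∃ k, m = k + 3 := ⟨m - 3, by omega⟩
  have hτ0 : τ ≠ 0 := by rcases hτ with rfl | rfl <;> norm_num
  obtain ⟨y, hyA, hyD⟩ := exists_mul_Emat_forms_neg k hτ0 κ
  subst hA hD
  apply exists_quadratic_le_zero_and_lt_of_neg_direction (d := Sum.elim y 0 ∘ finSumFinEquiv.symm)
    <;> rwa [dotProduct_reindex_fromBlocks_mulVec, smul_mulVec, dotProduct_smul, smul_eq_mul]
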